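/- arXiv:2603.07435 — 2 statements merged into one kernel-verified Lean document; each statement's English description precedes it below -/
import Mathlib

section
/- Let 0 < a < 1, 0 < b < 1, π₀ = b/(a+b), π₁ = a/(a+b), and 0 < D < min(π₀, π₁). With q₀ = (π₀ − D)/(1 − 2D), q₁ = (π₁ − D)/(1 − 2D), β = ln((1−D)/D), and Z(x) = q_x + q_{1−x}·e^{−β}, define the single-letter d-tilted information ȷ(x, D) = −βD/ln 2 − log₂ Z(x). Then for each x ∈ {0,1}, ȷ(x, D) = −log₂ π_x − h₂(D), where h₂(p) = −p log₂ p − (1−p) log₂ (1−p) is the binary entropy function. -/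
/-- The binary entropy function in bits. -/
noncomputable def binEntropy2 (p : ℝ) : ℝ :=
  -p * Real.logb 2 p - (1 - p) * Real.logb 2 (1 - p)

/-- the single-letter d-tilted information of the binary Hamming problem
at the Blahut–Arimoto operating point equals `-log₂ π_x - h₂(D)`. -/
theorem stmt_1 (a b D : ℝ) (ha0 : 0 < a) (ha1 : a < 1) (hb0 : 0 < b) (hb1 : b < 1)
    (hD0 : 0 < D) (hD : D < min (b / (a + b)) (a / (a + b)))
    (q : Bool → ℝ)
    (hq : ∀ x : Bool,
      q x = ((if x then a / (a + b) else b / (a + b)) - D) / (1 - 2 * D))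
    (β : ℝ) (hβ : β = Real.log ((1 - D) / D))
    (Z : Bool → ℝ)
    (hZ : ∀ x : Bool, Z x = q x + q (!x) * Real.exp (-β))
    (j : Bool → ℝ)
    (hj : ∀ x : Bool, j x = -(β * D) / Real.log 2 - Real.logb 2 (Z x)) :
    ∀ x : Bool,
      j x = -Real.logb 2 (if x then a / (a + b) else b / (a + b)) - binEntropy2 D := by
  intro x
  have hs : 0 < a + b := by linarith
  have hDa : D < a / (a + b) := lt_of_lt_of_le hD (min_le_right _ _)
  have hDb : D < b / (a + b) := lt_of_lt_of_le hD (min_le_left _ _)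
  have hsum : b / (a + b) + a / (a + b) = 1 := by field_simp; ring
  have h2D : (0:ℝ) < 1 - 2 * D := by linarith
  have hD1 : (0:ℝ) < 1 - D := by linarith
  have hexp : Real.exp (-β) = D / (1 - D) := by
    rw [hβ, ← Real.log_inv, Real.exp_log (by positivity), inv_div]
  set π : ℝ := if x then a / (a + b) else b / (a + b) with hπ
  have hπ0 : 0 < π := by
    cases x <;> simp [hπ] <;> positivity
  have hZeq : Z x = π / (1 - D) := by
    rw [hZ, hq, hq, hexp]
    have h2D' : (1:ℝ) - D * 2 ≠ 0 := by linarith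
    cases x <;> simp [hπ] <;> field_simp <;> ring
  have hlogZ : Real.logb 2 (Z x) = Real.logb 2 π - Real.logb 2 (1 - D) := by
    rw [hZeq, Real.logb_div (ne_of_gt hπ0) (ne_of_gt hD1)]
  have hβ' : β = Real.log (1 - D) - Real.log D :=
    by rw [hβ, Real.log_div (ne_of_gt hD1) (ne_of_gt hD0)]
  have hl2 : Real.log 2 ≠ 0 := ne_of_gt (Real.log_pos (by norm_num))
  rw [hj, hlogZ, hβ', binEntropy2]
  simp only [Real.logb]
  field_simp
  ring
end

section
/- Let {X_t}_{t≥1} be a stationary binary Markov chain with parameters (a, b), 0 < a, b < 1, stationary distribution (π₀, π₁) = (b/(a+b), a/(a+b)), λ₂ = 1 − a − b, ℓ = log₂(a/b), and 0 < D < min(π₀, π₁). Let J_n(D) = Σ_{t=1}^n ȷ(X_t, D) with ȷ(x,D) = −log₂ π_x − h₂(D). Then (1/n)·Var(J_n(D)) converges as n → ∞ to V_sl := ℓ²·π₀·π₁·(1 + λ₂)/(1 − λ₂) = (a·b·(2 − a − b)/(a + b)³)·(log₂(a/b))². -/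
open MeasureTheory

/-- Stationary distribution of the binary Markov chain with parameters `(a, b)`:
`π₀ = b/(a+b)`, `π₁ = a/(a+b)` (state `1` encoded as `true`). -/
noncomputable def statDist (a b : ℝ) (x : Bool) : ℝ :=
  if x then a / (a + b) else b / (a + b)

/-- Transition probabilities of the binary Markov chain:
`P₀₀ = 1-a`, `P₀₁ = a`, `P₁₀ = b`, `P₁₁ = 1-b`. -/
def transProb (a b : ℝ) (x y : Bool) : ℝ :=
  if x then (if y then 1 - b else b) else (if y then a else 1 - a)

/-- `X` is a stationary binary Markov chain with parameters `(a, b)` under `μ`: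
every finite path `(x_0, …, x_n)` has probability
`π_{x_0} ∏_{t=0}^{n-1} P_{x_t x_{t+1}}`. -/
def IsStatBinMarkov {Ω : Type*} [MeasurableSpace Ω] (μ : Measure Ω)
    (X : ℕ → Ω → Bool) (a b : ℝ) : Prop :=
  ∀ (n : ℕ) (x : Fin (n + 1) → Bool),
    μ {ω | ∀ t : Fin (n + 1), X t ω = x t}
      = ENNReal.ofReal
          (statDist a b (x 0) * ∏ t : Fin n, transProb a b (x t.castSucc) (x t.succ))


/-- The single-letter d-tilted information of the binary Hamming problem:
`ȷ(x, D) = -log₂ π_x - h₂(D)`. -/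
noncomputable def jTilt (a b D : ℝ) (x : Bool) : ℝ :=
  -Real.logb 2 (statDist a b x) - binEntropy2 D




noncomputable def pathP (a b : ℝ) (n : ℕ) (x : Fin (n+1) → Bool) : ℝ :=
  statDist a b (x 0) * ∏ t : Fin n, transProb a b (x t.castSucc) (x t.succ)

noncomputable def corrK (a b : ℝ) (k : ℕ) (u v : Bool) : ℝ :=
  statDist a b v + (1 - a - b)^k * ((if u = v then (1:ℝ) else 0) - statDist a b v)

lemma corrK_zero (a b : ℝ) (u v : Bool) : corrK a b 0 u v = if u = v then 1 else 0 := by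
  simp [corrK]

lemma corrK_succ (a b : ℝ) (hab : a + b ≠ 0) (k : ℕ) (u v : Bool) :
    ∑ z : Bool, corrK a b k u z * transProb a b z v = corrK a b (k+1) u v := by
  cases u <;> cases v <;>
    · simp [corrK, statDist, transProb, Fintype.sum_bool]
      field_simp
      ring

lemma stat_step (a b : ℝ) (hab : a + b ≠ 0) (v : Bool) :
    ∑ c : Bool, statDist a b c * transProb a b c v = statDist a b v := by
  cases v <;>
    · simp [statDist, transProb, Fintype.sum_bool]
      field_simp
      ring

lemma transProb_nonneg (a b : ℝ) (ha0 : 0 < a) (ha1 : a < 1) (hb0 : 0 < b) (hb1 : b < 1)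
    (x y : Bool) : 0 ≤ transProb a b x y := by
  cases x <;> cases y <;> simp [transProb] <;> linarith

lemma statDist_nonneg (a b : ℝ) (ha0 : 0 < a) (hb0 : 0 < b) (x : Bool) :
    0 ≤ statDist a b x := by
  cases x <;> · simp [statDist]; positivity

lemma corrK_nonneg (a b : ℝ) (ha0 : 0 < a) (ha1 : a < 1) (hb0 : 0 < b) (hb1 : b < 1)
    (k : ℕ) (u v : Bool) : 0 ≤ corrK a b k u v := by
  induction k generalizing v with
  | zero => rw [corrK_zero]; split <;> norm_num
  | succ k ih =>
      rw [← corrK_succ a b (by positivity) k u v]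
      exact Finset.sum_nonneg fun z _ => mul_nonneg (ih z) (transProb_nonneg a b ha0 ha1 hb0 hb1 z v)

lemma pathP_nonneg (a b : ℝ) (ha0 : 0 < a) (ha1 : a < 1) (hb0 : 0 < b) (hb1 : b < 1)
    (n : ℕ) (x : Fin (n+1) → Bool) : 0 ≤ pathP a b n x :=
  mul_nonneg (statDist_nonneg a b ha0 hb0 _)
    (Finset.prod_nonneg fun t _ => transProb_nonneg a b ha0 ha1 hb0 hb1 _ _)

lemma cov_formula (a b : ℝ) (hab : a + b ≠ 0) (k : ℕ) (f : Bool → ℝ) :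
    ∑ u : Bool, ∑ v : Bool, statDist a b u * corrK a b k u v * (f u * f v)
    = (∑ u : Bool, statDist a b u * f u)^2
      + (1-a-b)^k * (statDist a b false * statDist a b true * (f true - f false)^2) := by
  simp only [Fintype.sum_bool, corrK, statDist, ↓reduceIte, Bool.false_eq_true, Bool.true_eq_false]
  field_simp
  ring



-- sum over Fin (n+2) → Bool via cons
lemma sum_cons_split {M : Type*} [AddCommMonoid M] (n : ℕ) (F : (Fin (n+2) → Bool) → M) :
    ∑ x : Fin (n+2) → Bool, F x = ∑ c : Bool, ∑ y : Fin (n+1) → Bool, F (Fin.cons c y) := by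
  rw [← Equiv.sum_comp (Fin.consEquiv (fun _ : Fin (n+2) => Bool)) F, Fintype.sum_prod_type]
  exact Finset.sum_congr rfl fun c _ => Finset.sum_congr rfl fun y _ => by simp [Fin.consEquiv]

lemma sum_snoc_split {M : Type*} [AddCommMonoid M] (n : ℕ) (F : (Fin (n+2) → Bool) → M) :
    ∑ x : Fin (n+2) → Bool, F x = ∑ y : Fin (n+1) → Bool, ∑ c : Bool, F (Fin.snoc y c) := by
  rw [← Equiv.sum_comp (Fin.snocEquiv (fun _ : Fin (n+2) => Bool)) F, Fintype.sum_prod_type,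
    Finset.sum_comm]
  exact Finset.sum_congr rfl fun y _ => Finset.sum_congr rfl fun c _ => by simp [Fin.snocEquiv]

lemma pathP_cons (a b : ℝ) (n : ℕ) (y : Fin (n+1) → Bool) (c : Bool) :
    pathP a b (n+1) (Fin.cons c y)
      = statDist a b c * transProb a b c (y 0) *
        ∏ t : Fin n, transProb a b (y t.castSucc) (y t.succ) := by
  unfold pathP
  rw [Fin.prod_univ_succ]
  simp [Fin.cons_succ, ← Fin.succ_castSucc]
  ring

lemma pathP_snoc (a b : ℝ) (n : ℕ) (y : Fin (n+1) → Bool) (c : Bool) :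
    pathP a b (n+1) (Fin.snoc y c)
      = pathP a b n y * transProb a b (y (Fin.last n)) c := by
  unfold pathP
  rw [Fin.prod_univ_castSucc]
  have h0 : (Fin.snoc y c : Fin (n+2) → Bool) 0 = y 0 := by
    rw [← Fin.castSucc_zero, Fin.snoc_castSucc]
  rw [h0]
  have h1 : ∀ t : Fin n, (Fin.snoc y c : Fin (n+2) → Bool) (t.castSucc).castSucc
      = y t.castSucc := fun t => Fin.snoc_castSucc ..
  have h2 : ∀ t : Fin n, (Fin.snoc y c : Fin (n+2) → Bool) (t.castSucc).succ
      = y t.succ := by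
    intro t
    rw [Fin.succ_castSucc, Fin.snoc_castSucc]
  have h3 : (Fin.snoc y c : Fin (n+2) → Bool) ((Fin.last n).castSucc) = y (Fin.last n) :=
    Fin.snoc_castSucc ..
  have h4 : (Fin.snoc y c : Fin (n+2) → Bool) ((Fin.last n).succ) = c := by
    rw [Fin.succ_last]; exact Fin.snoc_last ..
  rw [h3, h4, Finset.prod_congr rfl (fun t _ => by rw [h1 t, h2 t])]
  ring

lemma drop_first (a b : ℝ) (hab : a + b ≠ 0) (n : ℕ) (H : (Fin (n+1) → Bool) → ℝ) :
    ∑ x : Fin (n+2) → Bool, pathP a b (n+1) x * H (x ∘ Fin.succ)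
      = ∑ y : Fin (n+1) → Bool, pathP a b n y * H y := by
  rw [sum_cons_split]
  have key : ∀ y : Fin (n+1) → Bool, ∑ c : Bool,
      pathP a b (n+1) (Fin.cons c y) * H ((Fin.cons c y) ∘ Fin.succ)
      = pathP a b n y * H y := by
    intro y
    have hcomp : ∀ c : Bool, (Fin.cons c y : Fin (n+2) → Bool) ∘ Fin.succ = y := by
      intro c; funext i; simp [Fin.cons_succ]
    calc ∑ c : Bool, pathP a b (n+1) (Fin.cons c y) * H ((Fin.cons c y) ∘ Fin.succ)
        = ∑ c : Bool, (statDist a b c * transProb a b c (y 0)) *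
            ((∏ t : Fin n, transProb a b (y t.castSucc) (y t.succ)) * H y) := by
          refine Finset.sum_congr rfl fun c _ => ?_
          rw [pathP_cons, hcomp]; ring
      _ = (∑ c : Bool, statDist a b c * transProb a b c (y 0)) *
            ((∏ t : Fin n, transProb a b (y t.castSucc) (y t.succ)) * H y) := by
          rw [Finset.sum_mul]
      _ = pathP a b n y * H y := by rw [stat_step a b hab]; unfold pathP; ring
  rw [Finset.sum_comm]
  exact Finset.sum_congr rfl fun y _ => key y


lemma pair_base (a b : ℝ) (hab : a + b ≠ 0) :
    ∀ (n : ℕ) (f g : Bool → ℝ),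
    ∑ x : Fin (n+1) → Bool, pathP a b n x * (f (x 0) * g (x (Fin.last n)))
      = ∑ u : Bool, ∑ v : Bool, statDist a b u * corrK a b n u v * (f u * g v) := by
  intro n
  induction n with
  | zero =>
      intro f g
      rw [← Equiv.sum_comp (Equiv.funUnique (Fin 1) Bool).symm
        (fun x => pathP a b 0 x * (f (x 0) * g (x (Fin.last 0))))]
      simp [pathP, corrK_zero, Fintype.sum_bool, Equiv.funUnique, statDist]
  | succ n ih =>
      intro f g
      rw [sum_snoc_split]
      have step : ∀ y : Fin (n+1) → Bool,
          ∑ c : Bool, pathP a b (n+1) (Fin.snoc y c) *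
            (f ((Fin.snoc y c : Fin (n+2) → Bool) 0) *
             g ((Fin.snoc y c : Fin (n+2) → Bool) (Fin.last (n+1))))
          = pathP a b n y * (f (y 0) * (∑ c : Bool, transProb a b (y (Fin.last n)) c * g c)) := by
        intro y
        simp only [Finset.mul_sum]
        refine Finset.sum_congr rfl fun c _ => ?_
        rw [pathP_snoc]
        have h0 : (Fin.snoc y c : Fin (n+2) → Bool) 0 = y 0 := by
          rw [← Fin.castSucc_zero, Fin.snoc_castSucc]
        have h1 : (Fin.snoc y c : Fin (n+2) → Bool) (Fin.last (n+1)) = c := Fin.snoc_last ..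
        rw [h0, h1]; ring
      rw [Finset.sum_congr rfl fun y _ => step y,
        ih f (fun z => ∑ c : Bool, transProb a b z c * g c)]
      refine Finset.sum_congr rfl fun u _ => ?_
      calc ∑ v : Bool, statDist a b u * corrK a b n u v *
              (f u * ∑ c : Bool, transProb a b v c * g c)
          = ∑ v : Bool, ∑ c : Bool, statDist a b u * (corrK a b n u v * transProb a b v c) *
              (f u * g c) := by
            refine Finset.sum_congr rfl fun v _ => ?_
            simp only [Finset.mul_sum]
            exact Finset.sum_congr rfl fun c _ => by ring
        _ = ∑ c : Bool, statDist a b u * (∑ v : Bool, corrK a b n u v * transProb a b v c) *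
              (f u * g c) := by
            rw [Finset.sum_comm]
            refine Finset.sum_congr rfl fun c _ => ?_
            simp only [Finset.mul_sum, Finset.sum_mul]
        _ = ∑ v : Bool, statDist a b u * corrK a b (n+1) u v * (f u * g v) := by
            exact Finset.sum_congr rfl fun c _ => by rw [corrK_succ a b hab]

lemma pair_pos (a b : ℝ) (hab : a + b ≠ 0) :
    ∀ (s n : ℕ) (hs : s ≤ n) (f g : Bool → ℝ),
    ∑ x : Fin (n+1) → Bool, pathP a b n x * (f (x ⟨s, by omega⟩) * g (x (Fin.last n)))
      = ∑ u : Bool, ∑ v : Bool, statDist a b u * corrK a b (n - s) u v * (f u * g v) := by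
  intro s
  induction s with
  | zero =>
      intro n hs f g
      have h0 : (⟨0, by omega⟩ : Fin (n+1)) = 0 := rfl
      rw [h0, pair_base a b hab n f g]
      simp
  | succ s ih =>
      intro n hs f g
      obtain ⟨m, rfl⟩ : ∃ m, n = m + 1 := ⟨n - 1, by omega⟩
      have hsm : s ≤ m := by omega
      have key : ∑ x : Fin (m+2) → Bool, pathP a b (m+1) x *
            (f (x ⟨s+1, by omega⟩) * g (x (Fin.last (m+1))))
          = ∑ y : Fin (m+1) → Bool, pathP a b m y *
            (f (y ⟨s, by omega⟩) * g (y (Fin.last m))) := by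
        exact drop_first a b hab m
          (fun y => f (y ⟨s, by omega⟩) * g (y (Fin.last m)))
      rw [key, ih m hsm f g, Nat.succ_sub_succ]


section Meas
variable {Ω : Type*} [MeasurableSpace Ω] (μ : Measure Ω) [IsProbabilityMeasure μ]
  (a b : ℝ) (ha0 : 0 < a) (ha1 : a < 1) (hb0 : 0 < b) (hb1 : b < 1)
  (X : ℕ → Ω → Bool) (hX : ∀ t, Measurable (X t)) (hM : IsStatBinMarkov μ X a b)

include ha0 ha1 hb0 hb1 hX hM in
lemma measure_pair (s k : ℕ) (u v : Bool) :
    μ {ω | X s ω = u ∧ X (s + k) ω = v}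
      = ENNReal.ofReal (statDist a b u * corrK a b k u v) := by
  have hab : a + b ≠ 0 := by positivity
  set m := s + k with hm
  set A : (Fin (m+1) → Bool) → Set Ω := fun x => {ω | ∀ t : Fin (m+1), X t ω = x t} with hA
  have hsm : s < m + 1 := by omega
  set S : Finset (Fin (m+1) → Bool) := Finset.univ.filter
    (fun x => x ⟨s, hsm⟩ = u ∧ x (Fin.last m) = v) with hS
  have hunion : {ω | X s ω = u ∧ X (s + k) ω = v} = ⋃ x ∈ S, A x := by
    ext ω
    simp only [Set.mem_setOf_eq, Set.mem_iUnion, hS, Finset.mem_filter, Finset.mem_univ,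
      true_and, hA]
    constructor
    · rintro ⟨h1, h2⟩
      exact ⟨fun t => X t ω, ⟨h1, h2⟩, fun t => rfl⟩
    · rintro ⟨x, ⟨h1, h2⟩, h3⟩
      exact ⟨(h3 ⟨s, hsm⟩).trans h1, (h3 (Fin.last m)).trans h2⟩
  have hdisj : (↑S : Set (Fin (m+1) → Bool)).PairwiseDisjoint A := by
    intro x _ y _ hxy
    refine Set.disjoint_left.mpr fun ω hx hy => hxy ?_
    exact funext fun t => (hx t).symm.trans (hy t)
  have hmeas : ∀ x ∈ S, MeasurableSet (A x) := by
    intro x _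
    have : A x = ⋂ t : Fin (m+1), (X t) ⁻¹' {x t} := by
      ext ω; simp [hA, Set.mem_iInter]
    rw [this]
    exact MeasurableSet.iInter fun t => (hX t) (measurableSet_singleton (x t))
  rw [hunion, measure_biUnion_finset hdisj hmeas]
  have hAx : ∀ x ∈ S, μ (A x) = ENNReal.ofReal (pathP a b m x) := fun x _ => hM m x
  rw [Finset.sum_congr rfl hAx,
    ← ENNReal.ofReal_sum_of_nonneg (fun x _ => pathP_nonneg a b ha0 ha1 hb0 hb1 m x)]
  congr 1
  rw [hS, Finset.sum_filter]
  have hterm : ∀ x : Fin (m+1) → Bool,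
      (if x ⟨s, hsm⟩ = u ∧ x (Fin.last m) = v then pathP a b m x else 0)
      = pathP a b m x * ((fun w => if w = u then (1:ℝ) else 0) (x ⟨s, hsm⟩) *
          (fun w => if w = v then (1:ℝ) else 0) (x (Fin.last m))) := by
    intro x
    by_cases h1 : x ⟨s, hsm⟩ = u <;> by_cases h2 : x (Fin.last m) = v <;> simp [h1, h2]
  rw [Finset.sum_congr rfl fun x _ => hterm x,
    pair_pos a b hab s m (by omega) (fun w => if w = u then (1:ℝ) else 0)
      (fun w => if w = v then (1:ℝ) else 0)]
  have hms : m - s = k := by omega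
  rw [hms]
  cases u <;> cases v <;> simp [Fintype.sum_bool]

include ha0 ha1 hb0 hb1 hX hM in
lemma integral_pairXY (f g : Bool → ℝ) (s t : ℕ) (hst : s ≤ t) :
    ∫ ω, f (X s ω) * g (X t ω) ∂μ
      = ∑ u : Bool, ∑ v : Bool, statDist a b u * corrK a b (t - s) u v * (f u * g v) := by
  obtain ⟨k, rfl⟩ : ∃ k, t = s + k := ⟨t - s, by omega⟩
  have hts : s + k - s = k := by omega
  rw [hts]
  have hsets : ∀ u v : Bool, MeasurableSet {ω | X s ω = u ∧ X (s + k) ω = v} := by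
    intro u v
    exact ((hX s) (measurableSet_singleton u)).inter ((hX (s+k)) (measurableSet_singleton v))
  have hpoint : ∀ ω, f (X s ω) * g (X (s + k) ω)
      = ∑ u : Bool, ∑ v : Bool,
          Set.indicator {ω' | X s ω' = u ∧ X (s + k) ω' = v} (fun _ => f u * g v) ω := by
    intro ω
    cases hu : X s ω <;> cases hv : X (s+k) ω <;>
      simp [Fintype.sum_bool, Set.indicator_apply, hu, hv]
  rw [integral_congr_ae (Filter.Eventually.of_forall hpoint),
    integral_finset_sum _ (fun u _ => integrable_finset_sum _
      (fun v _ => (integrable_const _).indicator (hsets u v)))]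
  refine Finset.sum_congr rfl fun u _ => ?_
  rw [integral_finset_sum _ (fun v _ => (integrable_const _).indicator (hsets u v))]
  refine Finset.sum_congr rfl fun v _ => ?_
  rw [integral_indicator_const _ (hsets u v), measureReal_def,
    measure_pair μ a b ha0 ha1 hb0 hb1 X hX hM s k u v,
    ENNReal.toReal_ofReal (mul_nonneg (statDist_nonneg a b ha0 hb0 u)
      (corrK_nonneg a b ha0 ha1 hb0 hb1 k u v))]
  simp [mul_comm]

end Meas


open ProbabilityTheory Filter in
lemma _dummy : True := trivial
open ProbabilityTheory Filter
-- pure real lemmas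
lemma cross_sum (c : ℝ) (hc : c ≠ 1) (n : ℕ) :
    ∑ s ∈ Finset.range n, c^(Nat.dist s n) = c * (c^n - 1)/(c - 1) := by
  have h1 : ∀ s ∈ Finset.range n, c^(Nat.dist s n) = (fun j => c^(j+1)) (n - 1 - s) := by
    intro s hs
    rw [Finset.mem_range] at hs
    rw [Nat.dist_eq_sub_of_le hs.le]
    congr 1
    omega
  rw [Finset.sum_congr rfl h1, Finset.sum_range_reflect (fun j => c^(j+1)) n]
  have : ∀ j ∈ Finset.range n, c^(j+1) = c * c^j := fun j _ => by ring
  rw [Finset.sum_congr rfl this, ← Finset.mul_sum, geom_sum_eq hc n]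
  ring

lemma S_closed (c : ℝ) (hc : c ≠ 1) (n : ℕ) :
    ∑ s ∈ Finset.range n, ∑ t ∈ Finset.range n, c^(Nat.dist s t)
      = n*(1+c)/(1-c) - 2*c*(1-c^n)/(1-c)^2 := by
  have hc1 : c - 1 ≠ 0 := sub_ne_zero.mpr hc
  have hc2 : (1:ℝ) - c ≠ 0 := sub_ne_zero.mpr (Ne.symm hc)
  induction n with
  | zero => simp
  | succ n ih =>
      have expand : ∑ s ∈ Finset.range (n+1), ∑ t ∈ Finset.range (n+1), c^(Nat.dist s t)
          = (∑ s ∈ Finset.range n, ∑ t ∈ Finset.range n, c^(Nat.dist s t))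
            + (∑ s ∈ Finset.range n, c^(Nat.dist s n))
            + (∑ t ∈ Finset.range n, c^(Nat.dist n t)) + 1 := by
        rw [Finset.sum_range_succ]
        have inner : ∀ s, ∑ t ∈ Finset.range (n+1), c^(Nat.dist s t)
            = (∑ t ∈ Finset.range n, c^(Nat.dist s t)) + c^(Nat.dist s n) :=
          fun s => Finset.sum_range_succ _ n
        rw [Finset.sum_congr rfl fun s _ => inner s, Finset.sum_add_distrib, inner n]
        simp [Nat.dist_self]
        ring
      have hcomm : ∑ t ∈ Finset.range n, c^(Nat.dist n t)
          = ∑ s ∈ Finset.range n, c^(Nat.dist s n) := by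
        exact Finset.sum_congr rfl fun t _ => by rw [Nat.dist_comm]
      rw [expand, hcomm, cross_sum c hc n, ih]
      push_cast
      field_simp
      ring

lemma lim_lemma (K c : ℝ) (habs : |c| < 1) :
    Tendsto (fun n : ℕ => (K * ((n:ℝ)*(1+c)/(1-c) - 2*c*(1-c^n)/(1-c)^2))/(n:ℝ))
      atTop (nhds (K*(1+c)/(1-c))) := by
  have hc2 : (1:ℝ) - c ≠ 0 := sub_ne_zero.mpr (Ne.symm (ne_of_lt (lt_of_abs_lt habs)))
  have hp : Tendsto (fun n : ℕ => c^n) atTop (nhds 0) :=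
    tendsto_pow_atTop_nhds_zero_of_abs_lt_one habs
  have h1 : Tendsto (fun n : ℕ => K*(2*c*(1-c^n)/(1-c)^2)) atTop
      (nhds (K*(2*c*(1-0)/(1-c)^2))) := by
    refine Tendsto.const_mul K ?_
    refine Tendsto.div_const ?_ _
    exact (tendsto_const_nhds.mul (tendsto_const_nhds.sub hp)).congr (fun n => by ring)
  have h2 : Tendsto (fun n : ℕ => K*(1+c)/(1-c) - (K*(2*c*(1-c^n)/(1-c)^2))*(1/(n:ℝ)))
      atTop (nhds (K*(1+c)/(1-c) - (K*(2*c*(1-0)/(1-c)^2))*0)) :=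
    tendsto_const_nhds.sub (h1.mul tendsto_one_div_atTop_nhds_zero_nat)
  rw [show K*(1+c)/(1-c) - (K*(2*c*(1-0)/(1-c)^2))*0 = K*(1+c)/(1-c) by ring] at h2
  refine Tendsto.congr' ?_ h2
  filter_upwards [eventually_ge_atTop 1] with n hn
  have hn0 : (n:ℝ) ≠ 0 := by exact_mod_cast (Nat.one_le_iff_ne_zero.mp hn)
  field_simp

set_option maxHeartbeats 1000000 in
open ProbabilityTheory Filter in
/-- the per-letter variance of the block d-tilted sum converges to the
single-letter asymptotic variance
`V_sl = ℓ² π₀ π₁ (1+λ₂)/(1-λ₂) = (a b (2-a-b)/(a+b)³) log₂²(a/b)`. -/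
theorem stmt_12 {Ω : Type*} [MeasurableSpace Ω] (μ : Measure Ω) [IsProbabilityMeasure μ]
    (a b D : ℝ) (ha0 : 0 < a) (ha1 : a < 1) (hb0 : 0 < b) (hb1 : b < 1)
    (hD0 : 0 < D) (hD : D < min (b / (a + b)) (a / (a + b)))
    (X : ℕ → Ω → Bool) (hX : ∀ t, Measurable (X t))
    (hM : IsStatBinMarkov μ X a b) :
    Tendsto
      (fun n : ℕ =>
        variance (fun ω => ∑ t ∈ Finset.range n, jTilt a b D (X t ω)) μ / (n : ℝ))
      atTop
      (nhds ((Real.logb 2 (a / b)) ^ 2 * (b / (a + b)) * (a / (a + b))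
        * (1 + (1 - a - b)) / (1 - (1 - a - b))))
    ∧ (Real.logb 2 (a / b)) ^ 2 * (b / (a + b)) * (a / (a + b))
        * (1 + (1 - a - b)) / (1 - (1 - a - b))
      = a * b * (2 - a - b) / (a + b) ^ 3 * (Real.logb 2 (a / b)) ^ 2 := by
  classical
  have habp : (0:ℝ) < a + b := by linarith
  have hab : a + b ≠ 0 := ne_of_gt habp
  set c : ℝ := 1 - a - b with hc
  have habs : |c| < 1 := abs_lt.mpr ⟨by rw [hc]; linarith, by rw [hc]; linarith⟩
  have hcne : c ≠ 1 := ne_of_lt (by rw [hc]; linarith)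
  set jT : Bool → ℝ := jTilt a b D with hjT
  set M : ℝ := ∑ u : Bool, statDist a b u * jT u with hMdef
  set σ2 : ℝ := statDist a b false * statDist a b true * (jT true - jT false)^2 with hs2
  -- measurability / integrability
  have measT : ∀ t, Measurable fun ω => jT (X t ω) :=
    fun t => (measurable_of_countable jT).comp (hX t)
  set C : ℝ := |jT false| + |jT true| with hC
  have hboundT : ∀ t (ω : Ω), ‖jT (X t ω)‖ ≤ C := by
    intro t ω
    rw [hC]
    cases h : X t ω <;> rw [Real.norm_eq_abs]
    · exact le_add_of_nonneg_right (abs_nonneg _)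
    · exact le_add_of_nonneg_left (abs_nonneg _)
  have intT : ∀ t, Integrable (fun ω => jT (X t ω)) μ := by
    intro t
    exact (integrable_const C).mono' (measT t).aestronglyMeasurable
      (Filter.Eventually.of_forall (hboundT t))
  have intProd : ∀ s t, Integrable (fun ω => jT (X s ω) * jT (X t ω)) μ := by
    intro s t
    refine (integrable_const (C * C)).mono' ((measT s).mul (measT t)).aestronglyMeasurable
      (Filter.Eventually.of_forall fun ω => ?_)
    rw [norm_mul]
    have h0 : (0:ℝ) ≤ C := le_trans (norm_nonneg _) (hboundT 0 ω)
    exact mul_le_mul (hboundT s ω) (hboundT t ω) (norm_nonneg _) h0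
  -- pair integrals
  have pair_int : ∀ s t : ℕ, ∫ ω, jT (X s ω) * jT (X t ω) ∂μ
      = M^2 + c^(Nat.dist s t) * σ2 := by
    have main : ∀ s t : ℕ, s ≤ t → ∫ ω, jT (X s ω) * jT (X t ω) ∂μ
        = M^2 + c^(Nat.dist s t) * σ2 := by
      intro s t hst
      rw [integral_pairXY μ a b ha0 ha1 hb0 hb1 X hX hM jT jT s t hst,
        cov_formula a b hab (t - s) jT, Nat.dist_eq_sub_of_le hst]
    intro s t
    rcases le_total s t with h | h
    · exact main s t h
    · rw [integral_congr_ae (Filter.Eventually.of_forall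
        (fun ω => mul_comm (jT (X s ω)) (jT (X t ω)))), Nat.dist_comm]
      exact main t s h
  -- single integrals
  have intSingle : ∀ t : ℕ, ∫ ω, jT (X t ω) ∂μ = M := by
    intro t
    have h := integral_pairXY μ a b ha0 ha1 hb0 hb1 X hX hM jT (fun _ => 1) t t le_rfl
    simp only [mul_one, Nat.sub_self, corrK_zero, Fintype.sum_bool] at h
    rw [h, hMdef, Fintype.sum_bool]
    simp
  -- Memℒp 2
  have memF2 : ∀ n : ℕ, MemLp (fun ω => ∑ t ∈ Finset.range n, jT (X t ω)) 2 μ := by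
    intro n
    refine MemLp.of_bound (Finset.aestronglyMeasurable_fun_sum _
      fun t _ => (measT t).aestronglyMeasurable) ((n : ℝ) * C)
      (Filter.Eventually.of_forall fun ω => ?_)
    calc ‖∑ t ∈ Finset.range n, jT (X t ω)‖
        ≤ ∑ t ∈ Finset.range n, ‖jT (X t ω)‖ := norm_sum_le _ _
      _ ≤ ∑ _t ∈ Finset.range n, C := Finset.sum_le_sum fun t _ => hboundT t ω
      _ = (n : ℝ) * C := by rw [Finset.sum_const, Finset.card_range, nsmul_eq_mul]
  -- variance identity
  have hvar : ∀ n : ℕ, variance (fun ω => ∑ t ∈ Finset.range n, jT (X t ω)) μ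
      = σ2 * ∑ s ∈ Finset.range n, ∑ t ∈ Finset.range n, c^(Nat.dist s t) := by
    intro n
    rw [variance_eq_sub (memF2 n)]
    have hpt : ∀ ω : Ω, ((fun ω => ∑ t ∈ Finset.range n, jT (X t ω))^2) ω
        = ∑ s ∈ Finset.range n, ∑ t ∈ Finset.range n, jT (X s ω) * jT (X t ω) := by
      intro ω
      simp only [Pi.pow_apply, pow_two, Finset.sum_mul_sum]
    have hF2 : ∫ ω, ((fun ω => ∑ t ∈ Finset.range n, jT (X t ω))^2) ω ∂μ
        = ∑ s ∈ Finset.range n, ∑ t ∈ Finset.range n, (M^2 + c^(Nat.dist s t) * σ2) := by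
      rw [integral_congr_ae (Filter.Eventually.of_forall hpt),
        integral_finset_sum _ (fun s _ => integrable_finset_sum _ fun t _ => intProd s t)]
      refine Finset.sum_congr rfl fun s _ => ?_
      rw [integral_finset_sum _ fun t _ => intProd s t]
      exact Finset.sum_congr rfl fun t _ => pair_int s t
    have hF1 : ∫ ω, (∑ t ∈ Finset.range n, jT (X t ω)) ∂μ = (n : ℝ) * M := by
      rw [integral_finset_sum _ fun t _ => intT t,
        Finset.sum_congr rfl fun t _ => intSingle t, Finset.sum_const, Finset.card_range,
        nsmul_eq_mul]
    rw [hF2, hF1]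
    have split : ∑ s ∈ Finset.range n, ∑ t ∈ Finset.range n, (M^2 + c^(Nat.dist s t) * σ2)
        = (n:ℝ)^2 * M^2
          + σ2 * ∑ s ∈ Finset.range n, ∑ t ∈ Finset.range n, c^(Nat.dist s t) := by
      rw [Finset.sum_congr rfl fun s (_ : s ∈ Finset.range n) => Finset.sum_add_distrib,
        Finset.sum_add_distrib]
      congr 1
      · rw [Finset.sum_congr rfl fun s (_ : s ∈ Finset.range n) =>
          (Finset.sum_const (M^2)).trans (by rw [Finset.card_range, nsmul_eq_mul]),
          Finset.sum_const, Finset.card_range, nsmul_eq_mul]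
        ring
      · rw [Finset.mul_sum]
        refine Finset.sum_congr rfl fun s _ => ?_
        rw [Finset.mul_sum]
        exact Finset.sum_congr rfl fun t _ => mul_comm _ _
    rw [split]
    ring
  -- the Δ² identity
  have hπ0 : statDist a b false = b/(a+b) := by simp [statDist]
  have hπ1 : statDist a b true = a/(a+b) := by simp [statDist]
  have hΔ : (jT true - jT false)^2 = (Real.logb 2 (a/b))^2 := by
    have h1 : jT true - jT false = Real.logb 2 (b/(a+b)) - Real.logb 2 (a/(a+b)) := by
      rw [hjT]
      unfold jTilt
      rw [hπ0, hπ1]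
      ring
    have hbne : b/(a+b) ≠ 0 := ne_of_gt (div_pos hb0 habp)
    have hane : a/(a+b) ≠ 0 := ne_of_gt (div_pos ha0 habp)
    have h2 : Real.logb 2 (b/(a+b)) - Real.logb 2 (a/(a+b))
        = Real.logb 2 ((b/(a+b))/(a/(a+b))) := (Real.logb_div hbne hane).symm
    have h3 : (b/(a+b))/(a/(a+b)) = b/a := by
      rw [div_div_div_cancel_right₀]
      exact hab
    have h4 : Real.logb 2 (b/a) = -Real.logb 2 (a/b) := by
      rw [← inv_div a b, Real.logb_inv]
    rw [h1, h2, h3, h4, neg_sq]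
  have hconst : (Real.logb 2 (a / b)) ^ 2 * (b / (a + b)) * (a / (a + b))
        * (1 + (1 - a - b)) / (1 - (1 - a - b)) = σ2 * (1 + c) / (1 - c) := by
    rw [hs2, hπ0, hπ1, hΔ, hc]
    ring
  constructor
  · rw [hconst]
    have hseq : (fun n : ℕ =>
          variance (fun ω => ∑ t ∈ Finset.range n, jT (X t ω)) μ / (n : ℝ))
        = fun n : ℕ => (σ2 * ((n:ℝ)*(1+c)/(1-c) - 2*c*(1-c^n)/(1-c)^2))/(n:ℝ) := by
      funext n
      rw [hvar n, S_closed c hcne n]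
    rw [hseq]
    exact lim_lemma σ2 c habs
  · rw [hconst, hs2, hπ0, hπ1, hΔ, hc]
    have h5 : (1:ℝ) - (1 - a - b) = a + b := by ring
    rw [h5]
    field_simp
    ring
end
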